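/- arXiv:1611.04692 — 6 statements merged into one kernel-verified Lean document; each statement's English description precedes it below -/
import Mathlib

section
/- Let X be a compact abelian topological group with Haar probability measure ℙ, and let g : X → 𝕋 be a continuous character of infinite order. Then the pushforward of ℙ under g is the normalized Haar (uniform) measure on the circle 𝕋. -/
open MeasureTheory

noncomputable instance : MeasurableSpace Circle := borel Circle
instance : BorelSpace Circle := ⟨rfl⟩

/-!
The image of `g` is a compact subgroup of the circle. A subgroup of the circle is either dense or
consists of roots of unity of a fixed order; the latter would force `g` to have finite order, so
the image is dense and closed, i.e. `g` is surjective. The pushforward of `μ` under a continuous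
surjective homomorphism is then a Haar probability measure on the circle, and Haar probability
measures are unique.
-/

/- The preimage of `H` under `Circle.exp` is a subgroup of `ℝ` containing `2π`: it is either
dense, and then so is `H`, or generated by some `c` with `k • c = 2π`, and then every element
of `H` is a `k`-th root of unity. -/
theorem Circle.dense_or_exists_pow_eq_one (H : Subgroup Circle) :
    Dense (H : Set Circle) ∨ ∃ n : ℕ, 0 < n ∧ ∀ z ∈ H, z ^ n = 1 := by
  let S : AddSubgroup ℝ := (Subgroup.toAddSubgroup H).comap Circle.expHom
  have hS : (S : Set ℝ) = Circle.exp ⁻¹' H := rfl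
  rcases S.dense_or_cyclic with hdense | ⟨c, hc⟩
  · left
    have := Circle.exp_surjective.denseRange.dense_image Circle.exp.continuous hdense
    rwa [hS, Set.image_preimage_eq _ Circle.exp_surjective] at this
  · right
    have h2π : 2 * Real.pi ∈ S := by
      show Circle.exp (2 * Real.pi) ∈ H
      rw [Circle.exp_two_pi]
      exact H.one_mem
    rw [hc, ← AddSubgroup.zmultiples_eq_closure] at h2π
    obtain ⟨k, hk⟩ := AddSubgroup.mem_zmultiples_iff.1 h2π
    have hk0 : k ≠ 0 := by
      rintro rfl
      simp [Real.pi_ne_zero] at hk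
    refine ⟨k.natAbs, Int.natAbs_pos.2 hk0, ?_⟩
    intro z hz
    obtain ⟨x, rfl⟩ := Circle.exp_surjective z
    have hx : x ∈ S := hz
    rw [hc, ← AddSubgroup.zmultiples_eq_closure] at hx
    obtain ⟨m, rfl⟩ := AddSubgroup.mem_zmultiples_iff.1 hx
    rw [pow_natAbs_eq_one, ← Circle.exp_zsmul, smul_comm, hk, Circle.exp_zsmul,
      Circle.exp_two_pi, one_zpow]

theorem PontryaginDual.surjective_of_pow_ne_one {X : Type*} [CommGroup X] [TopologicalSpace X]
    [CompactSpace X] (g : PontryaginDual X) (hg : ∀ n : ℕ, 0 < n → g ^ n ≠ 1) :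
    Function.Surjective g := by
  have hclosed : IsClosed (g.toMonoidHom.range : Set Circle) :=
    (isCompact_range g.continuous).isClosed
  rcases Circle.dense_or_exists_pow_eq_one g.toMonoidHom.range with hdense | ⟨n, hn, hpow⟩
  · rw [← Set.range_eq_univ, ← hdense.closure_eq, hclosed.closure_eq]
    rfl
  · refine absurd (ContinuousMonoidHom.ext fun x => ?_) (hg n hn)
    exact (ContinuousMonoidHom.pow_apply (g : X →ₜ* Circle) n x).trans (hpow (g x) ⟨x, rfl⟩)

/-- On a compact abelian group with Haar probability measure, the pushforward of the
Haar measure under a continuous character of infinite order is the normalized Haar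
(uniform) measure on the circle. -/
theorem map_haar_of_infinite_order_character_eq_haar_circle
    {X : Type*} [CommGroup X] [TopologicalSpace X] [IsTopologicalGroup X] [CompactSpace X]
    [MeasurableSpace X] [BorelSpace X]
    (μ : Measure X) [μ.IsHaarMeasure] [IsProbabilityMeasure μ]
    (g : PontryaginDual X) (hg : ∀ n : ℕ, 0 < n → g ^ n ≠ 1)
    (ν : Measure Circle) [ν.IsHaarMeasure] [IsProbabilityMeasure ν] :
    μ.map ⇑g = ν := by
  have : (μ.map ⇑g).IsHaarMeasure := Measure.isHaarMeasure_map_of_isFiniteMeasure μ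
    g.toMonoidHom g.continuous (g.surjective_of_pow_ne_one hg)
  have : IsProbabilityMeasure (μ.map ⇑g) :=
    Measure.isProbabilityMeasure_map g.continuous.aemeasurable
  exact Measure.isHaarMeasure_eq_of_isProbabilityMeasure _ _
end

section
/- Let X be a discrete abelian group. Suppose every element of the dual group X̂ has finite order and the set of orders is bounded. Let r be the least positive integer such that infinitely many elements of X̂ have order exactly r. Then r is prime. -/
open Set

/-- Abstract version: in a comm group where every element has positive (finite) order,
the minimal order achieved by infinitely many elements is prime. -/
theorem aux_min_order_prime {G : Type*} [CommGroup G]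
    (hord : ∀ g : G, 0 < orderOf g)
    (r : ℕ) (hinf : {g : G | orderOf g = r}.Infinite)
    (hmin : ∀ s : ℕ, 0 < s → {g : G | orderOf g = s}.Infinite → r ≤ s) :
    r.Prime := by
  -- r ≠ 0, r ≠ 1
  have hr0 : r ≠ 0 := by
    rintro rfl
    obtain ⟨g, hg⟩ := hinf.nonempty
    exact absurd hg.symm (hord g).ne
  have hr1 : r ≠ 1 := by
    rintro rfl
    exact hinf ((Set.finite_singleton (1 : G)).subset fun g hg => by
      simpa [orderOf_eq_one_iff] using hg)
  by_contra hnp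
  -- take a prime factor p of r with p < r
  obtain ⟨p, hp, hpd⟩ := Nat.exists_prime_and_dvd hr1
  have hrlt : 1 < r := lt_of_le_of_ne (Nat.one_le_iff_ne_zero.2 hr0) (Ne.symm hr1)
  have hplt : p < r := by
    rcases lt_or_eq_of_le (Nat.le_of_dvd (Nat.pos_of_ne_zero hr0) hpd) with h | h
    · exact h
    · exact absurd (h ▸ hp) hnp
  obtain ⟨m, hm⟩ := hpd
  have hm0 : m ≠ 0 := by rintro rfl; simp [hm] at hr0
  have hmlt : m < r := by
    rw [hm]; exact lt_mul_of_one_lt_left (Nat.pos_of_ne_zero hm0) hp.one_lt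
  -- the map g ↦ g ^ m sends order-r elements to order-p elements
  set S : Set G := {g | orderOf g = r} with hS
  have himg : ∀ g ∈ S, orderOf (g ^ m) = p := by
    intro g hg
    rw [orderOf_pow' g hm0, hg, hm, Nat.gcd_eq_right (dvd_mul_left m p),
      Nat.mul_div_cancel _ (Nat.pos_of_ne_zero hm0)]
  -- only finitely many elements of order p
  have hpfin : {g : G | orderOf g = p}.Finite := by
    by_contra h
    exact absurd (hmin p hp.pos h) (not_le.2 hplt)
  -- hence some fiber is infinite
  have hfib : ∃ δ : G, (S ∩ (fun g => g ^ m) ⁻¹' {δ}).Infinite := by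
    by_contra h
    push_neg at h
    have : S ⊆ ⋃ δ ∈ {g : G | orderOf g = p}, (S ∩ (fun g => g ^ m) ⁻¹' {δ}) := by
      intro g hg
      exact Set.mem_biUnion (himg g hg) ⟨hg, rfl⟩
    exact hinf ((hpfin.biUnion fun δ _ => h δ).subset this)
  obtain ⟨δ, hδ⟩ := hfib
  obtain ⟨g0, hg0S, hg0⟩ := hδ.nonempty
  -- translate: g ↦ g * g0⁻¹ maps the fiber injectively into {h | h ^ m = 1}
  have hsub : (fun g : G => g * g0⁻¹) '' (S ∩ (fun g => g ^ m) ⁻¹' {δ}) ⊆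
      {h : G | h ^ m = 1} := by
    rintro _ ⟨g, ⟨hgS, hgm⟩, rfl⟩
    simp only [Set.mem_preimage, Set.mem_singleton_iff] at hgm hg0
    simp [mul_pow, hgm, inv_pow, hg0]
  have hinf2 : {h : G | h ^ m = 1}.Infinite :=
    (hδ.image (fun a _ b _ h => by simpa using mul_right_cancel h)).mono hsub
  -- but {h | h ^ m = 1} is a finite union over divisors of m, each finite by minimality
  have : {h : G | h ^ m = 1} ⊆ ⋃ s ∈ m.divisors, {h : G | orderOf h = s} := by
    intro h hh
    have : orderOf h ∣ m := orderOf_dvd_of_pow_eq_one hh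
    exact Set.mem_biUnion (Nat.mem_divisors.2 ⟨this, hm0⟩) rfl
  refine hinf2 ((Set.Finite.biUnion (Finset.finite_toSet _) fun s hs => ?_).subset this)
  by_contra hcon
  have hs' := Nat.mem_divisors.1 (Finset.mem_coe.1 hs)
  have hspos : 0 < s := Nat.pos_of_mem_divisors (Finset.mem_coe.1 hs)
  have := hmin s hspos hcon
  exact absurd (lt_of_le_of_lt (Nat.le_of_dvd (Nat.pos_of_ne_zero hm0) hs'.1) hmlt)
    (not_lt.2 this)

/-- If every element of the dual of a discrete abelian group `X` has finite order and
the set of orders is bounded, then the least positive integer `r` such that infinitely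
many characters have order exactly `r` is prime. -/
theorem min_order_with_infinitely_many_elements_is_prime
    {X : Type*} [CommGroup X] [TopologicalSpace X] [DiscreteTopology X]
    (hord : ∀ γ : PontryaginDual X, 0 < orderOf γ)
    (hbdd : ∃ N : ℕ, ∀ γ : PontryaginDual X, orderOf γ ≤ N)
    (r : ℕ) (hr : 0 < r)
    (hinf : {γ : PontryaginDual X | orderOf γ = r}.Infinite)
    (hmin : ∀ s : ℕ, 0 < s → {γ : PontryaginDual X | orderOf γ = s}.Infinite → r ≤ s) :
    r.Prime :=
  aux_min_order_prime hord r hinf hmin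
end

section
/- Let G be an infinite abelian group in which every element has finite order and the set of orders is bounded. Let r be the least positive integer such that infinitely many elements of G have order exactly r. Then there exists a sequence (g_k) of elements of G such that every g_k has order r and for each k ≥ 2, g_k does not lie in the subgroup generated by g_1, …, g_{k-1}. -/
private noncomputable def seqAux {G : Type*} [DecidableEq G] (F : Finset G → G) : ℕ → G
  | n => F (Finset.image (fun i : Fin n => seqAux F i.1) Finset.univ)
decreasing_by exact i.isLt

private lemma seqAux_image {G : Type*} [DecidableEq G] (F : Finset G → G) (n : ℕ) :
    ((Finset.image (fun i : Fin n => seqAux F i.1) Finset.univ : Finset G) : Set G)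
      = seqAux F '' Set.Iio n := by
  ext x
  simp [Set.mem_image, Fin.exists_iff, Set.mem_Iio]

/-- In an infinite abelian group of bounded exponent, letting `r` be the least positive
integer such that infinitely many elements have order exactly `r`, there is a sequence
of elements of order `r` each of which lies outside the subgroup generated by the
previous ones. -/
theorem exists_independent_sequence_of_order_r
    {G : Type*} [CommGroup G] [Infinite G]
    (hord : ∀ g : G, 0 < orderOf g)
    (hbdd : ∃ N : ℕ, ∀ g : G, orderOf g ≤ N)
    (r : ℕ) (hr : 0 < r)
    (hinf : {g : G | orderOf g = r}.Infinite)
    (hmin : ∀ s : ℕ, 0 < s → {g : G | orderOf g = s}.Infinite → r ≤ s) :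
    ∃ g : ℕ → G, (∀ k, orderOf (g k) = r) ∧
      ∀ k, g k ∉ Subgroup.closure (g '' Set.Iio k) := by
  classical
  -- every finitely generated subgroup is finite
  have hfin : ∀ s : Finset G, ((Subgroup.closure (s : Set G) : Subgroup G) : Set G).Finite := by
    intro s
    have hFG : Group.FG (Subgroup.closure (s : Set G)) :=
      (Group.fg_iff_subgroup_fg _).mpr ⟨s, rfl⟩
    have htor : Monoid.IsTorsion (Subgroup.closure (s : Set G)) := by
      intro x
      have : orderOf (x : G) = orderOf x :=
        orderOf_injective (Subgroup.closure (s : Set G)).subtype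
          (Subgroup.subtype_injective _) x
      rw [← orderOf_pos_iff, ← this]
      exact hord _
    haveI : Group.FG (Subgroup.closure (s : Set G)) := hFG
    haveI : Finite (Subgroup.closure (s : Set G)) :=
      CommGroup.finite_of_fg_torsion _ htor
    exact Set.toFinite _
  -- choose a fresh element of order r for each finite set
  have hstep : ∀ s : Finset G, ∃ g : G, orderOf g = r ∧ g ∉ Subgroup.closure (s : Set G) := by
    intro s
    obtain ⟨g, hg⟩ := (hinf.diff (hfin s)).nonempty
    exact ⟨g, hg.1, hg.2⟩
  choose F hF1 hF2 using hstep
  refine ⟨seqAux F, fun k => ?_, fun k => ?_⟩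
  · rw [seqAux]; exact hF1 _
  · rw [seqAux, ← seqAux_image F k]
    exact hF2 _
end

section
/- Let X be a compact abelian group with Haar probability measure ℙ, let r be a prime, and let g_1, …, g_n be continuous characters of X, each of order r, such that for each k ≥ 2, g_k is not in the subgroup of the dual group generated by g_1, …, g_{k-1}. Then ℙ(⋂_{k=1}^n g_k⁻¹({1})) = r^{-n}; that is, the events {g_k = 1} are independent. -/
open MeasureTheory

/-! Each `g k` takes values in the `r`-th roots of unity, so the indicator of `{g k = 1}` is
`r⁻¹ ∑_{j<r} g kʲ`. Multiplying over `k` writes the indicator of the intersection as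
`r⁻ⁿ ∑_p ∏ₖ g kᵖᵏ` with `0 ≤ p k < r`, a sum of characters. By translation invariance a
character integrates to `1` if it is trivial and to `0` otherwise, and the independence
hypothesis says that `∏ₖ g kᵖᵏ` is trivial only for `p = 0`. -/

open Finset

theorem geom_sum_eq_ite_of_pow_eq_one {K : Type*} [DivisionRing K] [DecidableEq K] {a : K}
    {r : ℕ} (ha : a ^ r = 1) : ∑ i ∈ range r, a ^ i = if a = 1 then (r : K) else 0 := by
  split_ifs with h
  · simp [h]
  · rw [geom_sum_eq h, ha, sub_self, zero_div]

theorem mem_zpowers_pow_of_orderOf_prime {G : Type*} [Group G] {x : G} {k : ℕ}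
    (hx : (orderOf x).Prime) (hk : x ^ k ≠ 1) : x ∈ Subgroup.zpowers (x ^ k) :=
  mem_zpowers_pow_iff.mpr <| Nat.Coprime.symm <|
    hx.coprime_iff_not_dvd.mpr fun h => hk (orderOf_dvd_iff_pow_eq_one.mp h)

theorem pow_eq_one_of_prod_pow_eq_one {G ι : Type*} [CommGroup G] [LinearOrder ι] {g : ι → G}
    (hord : ∀ k, (orderOf (g k)).Prime)
    (hind : ∀ k, g k ∉ Subgroup.closure (g '' {j | j < k})) {p : ι → ℕ} (s : Finset ι) :
    ∏ k ∈ s, g k ^ p k = 1 → ∀ k ∈ s, g k ^ p k = 1 := by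
  induction s using Finset.induction_on_max with
  | empty => simp
  | insert m s hlt ih =>
    intro hprod
    have hm : m ∉ s := fun h => (hlt m h).false
    rw [prod_insert hm] at hprod
    have hrest : ∏ k ∈ s, g k ^ p k ∈ Subgroup.closure (g '' {j | j < m}) :=
      Subgroup.prod_mem _ fun k hk =>
        Subgroup.pow_mem _ (Subgroup.subset_closure
          (Set.mem_image_of_mem g (show k ∈ {j | j < m} from hlt k hk))) _
    have hgm : g m ^ p m = 1 := by
      by_contra hne
      refine hind m (Subgroup.zpowers_le.mpr ?_ (mem_zpowers_pow_of_orderOf_prime (hord m) hne))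
      rw [eq_inv_of_mul_eq_one_left hprod]
      exact inv_mem hrest
    rw [hgm, one_mul] at hprod
    simpa [hgm] using ih hprod

theorem filter_prod_pow_eq_one_eq_singleton_zero {G ι : Type*} [CommGroup G] [DecidableEq G]
    [LinearOrder ι] [Fintype ι] {r : ℕ} (hr : r.Prime) {g : ι → G}
    (hord : ∀ k, orderOf (g k) = r) (hind : ∀ k, g k ∉ Subgroup.closure (g '' {j | j < k})) :
    {p ∈ Fintype.piFinset fun _ : ι => range r | ∏ k, g k ^ p k = 1} = {0} := by
  ext p
  simp only [mem_filter, mem_singleton, Fintype.mem_piFinset, mem_range]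
  constructor
  · rintro ⟨hlt, hprod⟩
    funext k
    have hk :=
      pow_eq_one_of_prod_pow_eq_one (fun k => hord k ▸ hr) hind univ hprod k (mem_univ k)
    exact Nat.eq_zero_of_dvd_of_lt (hord k ▸ orderOf_dvd_of_pow_eq_one hk) (hlt k)
  · rintro rfl
    simp [hr.pos]

@[simp, norm_cast]
theorem Circle.coe_prod {ι : Type*} (s : Finset ι) (z : ι → Circle) :
    (↑(∏ i ∈ s, z i) : ℂ) = ∏ i ∈ s, (z i : ℂ) :=
  map_prod Circle.coeHom z s

namespace PontryaginDual

section Eval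

variable {A : Type*} [Monoid A] [TopologicalSpace A]

@[simps]
noncomputable def evalHom (a : A) : PontryaginDual A →* Circle where
  toFun χ := χ a
  map_one' := rfl
  map_mul' _ _ := rfl

theorem pow_apply (χ : PontryaginDual A) (n : ℕ) (a : A) : (χ ^ n) a = χ a ^ n :=
  map_pow (evalHom a) χ n

theorem prod_pow_apply {ι : Type*} (s : Finset ι) (χ : ι → PontryaginDual A) (p : ι → ℕ)
    (a : A) : (∏ k ∈ s, χ k ^ p k) a = ∏ k ∈ s, χ k a ^ p k := by
  simp only [← evalHom_apply, map_prod, map_pow]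

end Eval

variable {X : Type*} [Group X] [TopologicalSpace X] [MeasurableSpace X]

theorem integrable [OpensMeasurableSpace X] (μ : Measure X) [IsFiniteMeasure μ]
    (χ : PontryaginDual X) : Integrable (fun x => (χ x : ℂ)) μ :=
  .of_bound (by fun_prop) 1 (.of_forall fun x => (Circle.norm_coe _).le)

open scoped Classical in
theorem integral_eq_ite [MeasurableMul X] (μ : Measure X) [μ.IsMulLeftInvariant]
    [IsProbabilityMeasure μ] (χ : PontryaginDual X) :
    ∫ x, (χ x : ℂ) ∂μ = if χ = 1 then 1 else 0 := by
  split_ifs with hχ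
  · simp [hχ]
  obtain ⟨y, hy⟩ : ∃ y, χ y ≠ 1 := by
    by_contra! h
    exact hχ (ContinuousMonoidHom.ext h)
  have htrans : (χ y : ℂ) * ∫ x, (χ x : ℂ) ∂μ = ∫ x, (χ x : ℂ) ∂μ := by
    simpa [integral_const_mul] using integral_mul_left_eq_self (fun x => (χ x : ℂ)) y (μ := μ)
  have hzero : ((χ y : ℂ) - 1) * ∫ x, (χ x : ℂ) ∂μ = 0 := by
    rw [sub_mul, one_mul, htrans, sub_self]
  exact (mul_eq_zero.mp hzero).resolve_left (sub_ne_zero.mpr (Circle.coe_eq_one.not.mpr hy))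

end PontryaginDual

section Indicator

variable {X ι : Type*} [Monoid X] [TopologicalSpace X] [Fintype ι] [DecidableEq ι]

open scoped Classical in
theorem indicator_iInter_preimage_one_eq_sum {r : ℕ} (hr : r ≠ 0) {g : ι → PontryaginDual X}
    (hg : ∀ k, g k ^ r = 1) (x : X) :
    (⋂ k, g k ⁻¹' {1}).indicator 1 x =
      ((r : ℂ) ^ Fintype.card ι)⁻¹ *
        ∑ p ∈ Fintype.piFinset fun _ => range r, ((∏ k, g k ^ p k) x : ℂ) := by
  have hroot : ∀ k, (g k x : ℂ) ^ r = 1 := fun k => by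
    rw [← Circle.coe_pow, ← PontryaginDual.pow_apply, hg, PontryaginDual.one_apply,
      Circle.coe_one]
  calc (⋂ k, g k ⁻¹' {1}).indicator 1 x = ∏ k, if g k x = 1 then (1 : ℂ) else 0 := by
        simp [Set.indicator, Fintype.prod_boole]
    _ = ∏ k, (r : ℂ)⁻¹ * ∑ j ∈ range r, (g k x : ℂ) ^ j := by
        refine Fintype.prod_congr _ _ fun k => ?_
        rw [geom_sum_eq_ite_of_pow_eq_one (hroot k)]
        simp [hr, Circle.coe_eq_one]
    _ = _ := by
        rw [prod_mul_distrib, prod_const, card_univ, inv_pow, prod_univ_sum]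
        simp [PontryaginDual.prod_pow_apply]

end Indicator
section Haar

variable {X ι : Type*} [Group X] [TopologicalSpace X] [MeasurableSpace X]
  [OpensMeasurableSpace X] [MeasurableMul X] [Fintype ι] [DecidableEq ι]

open scoped Classical in
theorem measureReal_iInter_preimage_one_eq (μ : Measure X) [μ.IsMulLeftInvariant]
    [IsProbabilityMeasure μ] {r : ℕ} (hr : r ≠ 0) {g : ι → PontryaginDual X}
    (hg : ∀ k, g k ^ r = 1) :
    μ.real (⋂ k, g k ⁻¹' {1}) =
      #{p ∈ Fintype.piFinset fun _ => range r | ∏ k, g k ^ p k = 1} /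
        (r : ℝ) ^ Fintype.card ι := by
  have hS : MeasurableSet (⋂ k, g k ⁻¹' {1}) :=
    .iInter fun k => (isClosed_singleton.preimage (g k).continuous).measurableSet
  apply Complex.ofReal_injective
  calc (μ.real (⋂ k, g k ⁻¹' {1}) : ℂ) = ∫ x, (⋂ k, g k ⁻¹' {1}).indicator 1 x ∂μ := by
        simp [integral_indicator hS]
    _ = ((r : ℂ) ^ Fintype.card ι)⁻¹ *
          ∑ p ∈ Fintype.piFinset fun _ => range r, ∫ x, ((∏ k, g k ^ p k) x : ℂ) ∂μ := by
        simp_rw [indicator_iInter_preimage_one_eq_sum hr hg]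
        rw [integral_const_mul, integral_finsetSum _ fun p _ => PontryaginDual.integrable μ _]
    _ = _ := by
        simp_rw [PontryaginDual.integral_eq_ite, sum_boole]
        push_cast
        ring

end Haar

theorem haar_measure_inter_kernels_of_independent_characters_general
    {X : Type*} [CommGroup X] [TopologicalSpace X] [IsTopologicalGroup X]
    [MeasurableSpace X] [BorelSpace X]
    (μ : Measure X) [μ.IsHaarMeasure] [IsProbabilityMeasure μ]
    (r : ℕ) (hr : r.Prime) (n : ℕ) (g : Fin n → PontryaginDual X)
    (hord : ∀ k, orderOf (g k) = r)
    (hind : ∀ k : Fin n, g k ∉ Subgroup.closure (g '' {j | j < k})) :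
    μ (⋂ k, ⇑(g k) ⁻¹' {1}) = ((r : ENNReal) ^ n)⁻¹ := by
  classical
  have hreal := measureReal_iInter_preimage_one_eq μ hr.ne_zero
    fun k => hord k ▸ pow_orderOf_eq_one (g k)
  rw [filter_prod_pow_eq_one_eq_singleton_zero hr hord hind, card_singleton,
    Fintype.card_fin] at hreal
  rw [← ofReal_measureReal, hreal, Nat.cast_one, one_div,
    ENNReal.ofReal_inv_of_pos (pow_pos (Nat.cast_pos.mpr hr.pos) n),
    ENNReal.ofReal_pow (Nat.cast_nonneg r), ENNReal.ofReal_natCast]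

/-- On a compact abelian group with Haar probability measure, if `g 1, …, g n` are
continuous characters of prime order `r` and each lies outside the subgroup of the dual
generated by its predecessors, then the events `{g k = 1}` are independent:
`ℙ(⋂ₖ gₖ⁻¹{1}) = r⁻ⁿ`. -/
theorem haar_measure_inter_kernels_of_independent_characters
    {X : Type*} [CommGroup X] [TopologicalSpace X] [IsTopologicalGroup X] [CompactSpace X]
    [MeasurableSpace X] [BorelSpace X]
    (μ : Measure X) [μ.IsHaarMeasure] [IsProbabilityMeasure μ]
    (r : ℕ) (hr : r.Prime) (n : ℕ) (g : Fin n → PontryaginDual X)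
    (hord : ∀ k, orderOf (g k) = r)
    (hind : ∀ k : Fin n, g k ∉ Subgroup.closure (g '' {j | j < k})) :
    μ (⋂ k, ⇑(g k) ⁻¹' {1}) = ((r : ENNReal) ^ n)⁻¹ :=
  haar_measure_inter_kernels_of_independent_characters_general μ r hr n g hord hind
end

section
/- Let X be a compact or discrete abelian group with Haar measures on X and its dual X̂ normalized so that Plancherel holds. For any ψ ∈ L²(X) with ‖ψ‖₂ = 1, the product of the Haar measures of the supports of ψ and of its Fourier transform ψ̂ satisfies α(supp ψ) · α̂(supp ψ̂) ≥ 1. Moreover the bound is attained (by normalized characters if X is compact and normalized delta functions if X is discrete). -/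
open MeasureTheory

noncomputable instance {X : Type*} [Monoid X] [TopologicalSpace X] :
    MeasurableSpace (PontryaginDual X) := borel _

instance {X : Type*} [Monoid X] [TopologicalSpace X] :
    BorelSpace (PontryaginDual X) := ⟨rfl⟩

/-- The Fourier transform of an integrable function on an abelian group:
`f̂(γ) = ∫ f(x) γ(x)⁻¹ dμ(x)`. -/
noncomputable def fourierTransform {X : Type*} [CommGroup X] [TopologicalSpace X]
    [MeasurableSpace X] (μ : Measure X) (f : X → ℂ) : PontryaginDual X → ℂ :=
  fun γ => ∫ x, f x * ((γ x)⁻¹ : ℂ) ∂μ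

/-! Pointwise `‖ψ̂‖∞ ≤ ‖ψ‖₁ ≤ α(supp ψ)^{1/2} ‖ψ‖₂` (Cauchy–Schwarz on the support), so
integrating `|ψ̂|²` over its support gives `‖ψ̂‖₂² ≤ α(supp ψ) ν(supp ψ̂) ‖ψ‖₂²`, and Plancherel
turns this into the bound. Equality holds for the normalized indicator of a subgroup `H` of finite
positive measure: by orthogonality of characters its transform is a constant multiple of the
indicator of the annihilator `H^⊥`, and Plancherel then forces `ν(H^⊥) = α(H)⁻¹`. Take `H = X`
when `X` is compact and `H = {1}` when `X` is discrete. -/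

open ENNReal Function Set

section SupportEstimates

variable {X E : Type*} [MeasurableSpace X] [NormedAddCommGroup E] (μ : Measure X)

lemma eLpNorm_one_le_measure_support_mul_eLpNorm_two {f : X → E}
    (hf : AEStronglyMeasurable f μ) :
    eLpNorm f 1 μ ≤ μ (support f) ^ (1 / 2 : ℝ) * eLpNorm f 2 μ := by
  rw [← eLpNorm_restrict_eq_of_support_subset subset_rfl,
    ← eLpNorm_restrict_eq_of_support_subset (p := 2) subset_rfl, mul_comm,
    ← Measure.restrict_apply_univ]
  convert eLpNorm_le_eLpNorm_mul_rpow_measure_univ one_le_two hf.restrict using 3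
  norm_num

lemma eLpNorm_le_mul_measure_support_of_enorm_le {f : X → E} {C : ℝ≥0∞}
    (hC : ∀ x, ‖f x‖ₑ ≤ C) (p : ℝ≥0∞) :
    eLpNorm f p μ ≤ C * μ (support f) ^ p.toReal⁻¹ := by
  rw [← eLpNorm_restrict_eq_of_support_subset subset_rfl, ← Measure.restrict_apply_univ]
  exact eLpNorm_le_of_ae_enorm_bound (ae_of_all _ hC)

lemma eLpNorm_two_indicator_const_eq_one_iff {s : Set X} (hs : MeasurableSet s) (c : E) :
    eLpNorm (s.indicator fun _ => c) 2 μ = 1 ↔ ‖c‖ₑ ^ 2 * μ s = 1 := by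
  have hsq : ‖c‖ₑ ^ 2 * μ s = (‖c‖ₑ * μ s ^ (1 / 2 : ℝ)) ^ (2 : ℝ) := by
    rw [mul_rpow_of_nonneg _ _ zero_le_two, ← rpow_mul]; norm_num
  rw [eLpNorm_indicator_const hs two_ne_zero ofNat_ne_top, hsq, toReal_ofNat]
  conv_rhs => rw [← one_rpow (2 : ℝ)]
  exact (rpow_left_injective two_ne_zero).eq_iff.symm

end SupportEstimates

lemma exists_enorm_sq_mul_eq_one {a : ℝ≥0∞} (h0 : a ≠ 0) (htop : a ≠ ∞) :
    ∃ c : ℂ, ‖c‖ₑ ^ 2 * a = 1 := by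
  refine ⟨((√a.toReal)⁻¹ : ℝ), ?_⟩
  rw [← ofReal_norm, Complex.norm_real, Real.norm_of_nonneg (by positivity),
    ← ofReal_pow (by positivity), inv_pow, Real.sq_sqrt toReal_nonneg,
    ofReal_inv_of_pos (toReal_pos h0 htop), ofReal_toReal htop]
  exact ENNReal.inv_mul_cancel h0 htop

namespace PontryaginDual

variable {X : Type*} [CommGroup X] [TopologicalSpace X]

def annihilator (H : Subgroup X) : Set (PontryaginDual X) :=
  {γ | ∀ x ∈ H, γ x = 1}

lemma isClosed_annihilator (H : Subgroup X) : IsClosed (annihilator H) := by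
  simp only [annihilator, ofPred_forall]
  exact isClosed_biInter fun x _ =>
    isClosed_eq (continuous_eval_const (F := X →ₜ* Circle) x) continuous_const

end PontryaginDual

open PontryaginDual

section Fourier

variable {X : Type*} [CommGroup X] [TopologicalSpace X] [MeasurableSpace X]

def PlancherelHolds (α : Measure X) (ν : Measure (PontryaginDual X)) : Prop :=
  ∀ g : X → ℂ, Integrable g α → MemLp g 2 α →
    eLpNorm (fourierTransform α g) 2 ν = eLpNorm g 2 α

lemma enorm_fourierTransform_le (μ : Measure X) (f : X → ℂ) (γ : PontryaginDual X) :
    ‖fourierTransform μ f γ‖ₑ ≤ eLpNorm f 1 μ := by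
  rw [eLpNorm_one_eq_lintegral_enorm]
  refine (enorm_integral_le_lintegral_enorm _).trans_eq (lintegral_congr fun x => ?_)
  rw [enorm_mul, enorm_inv (Circle.coe_ne_zero _), ← ofReal_norm (γ x : ℂ), Circle.norm_coe]
  simp

theorem eLpNorm_fourierTransform_le (α : Measure X) (ν : Measure (PontryaginDual X)) {f : X → ℂ}
    (hf : AEStronglyMeasurable f α) :
    eLpNorm (fourierTransform α f) 2 ν ≤
      (α (support f) * ν (support (fourierTransform α f))) ^ (1 / 2 : ℝ) * eLpNorm f 2 α :=
  calc eLpNorm (fourierTransform α f) 2 ν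
      ≤ eLpNorm f 1 α * ν (support (fourierTransform α f)) ^ (1 / 2 : ℝ) := by
        simpa using eLpNorm_le_mul_measure_support_of_enorm_le ν (enorm_fourierTransform_le α f) 2
    _ ≤ α (support f) ^ (1 / 2 : ℝ) * eLpNorm f 2 α *
          ν (support (fourierTransform α f)) ^ (1 / 2 : ℝ) := by
        gcongr
        exact eLpNorm_one_le_measure_support_mul_eLpNorm_two α hf
    _ = _ := by rw [mul_rpow_of_nonneg _ _ (by norm_num)]; ring

theorem one_le_measure_support_mul_measure_support_fourierTransform {α : Measure X}
    {ν : Measure (PontryaginDual X)} (hPl : PlancherelHolds α ν) {ψ : X → ℂ}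
    (hψ : Integrable ψ α) (hnorm : eLpNorm ψ 2 α = 1) :
    1 ≤ α (support ψ) * ν (support (fourierTransform α ψ)) := by
  have hψ2 : MemLp ψ 2 α := ⟨hψ.aestronglyMeasurable, by rw [hnorm]; exact one_lt_top⟩
  have h := eLpNorm_fourierTransform_le α ν hψ.aestronglyMeasurable
  rw [hPl ψ hψ hψ2, hnorm, mul_one, ← one_rpow (1 / 2 : ℝ)] at h
  exact (rpow_le_rpow_iff (by norm_num)).1 h

variable [MeasurableMul X] (μ : Measure X) [μ.IsMulLeftInvariant] {H : Subgroup X}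

lemma setIntegral_character_eq_zero_of_notMem_annihilator (hH : MeasurableSet (H : Set X))
    {γ : PontryaginDual X} (hγ : γ ∉ annihilator H) :
    ∫ x in H, ((γ x)⁻¹ : ℂ) ∂μ = 0 := by
  obtain ⟨a, ha, hγa⟩ : ∃ a ∈ H, γ a ≠ 1 := by simpa [annihilator] using hγ
  set g : X → ℂ := fun x => (γ x : ℂ)⁻¹
  have hshift :
      ∀ x, (H : Set X).indicator g (a * x) = (γ a : ℂ)⁻¹ * (H : Set X).indicator g x := by
    intro x
    by_cases hx : x ∈ H
    · rw [indicator_of_mem (H.mul_mem ha hx), indicator_of_mem hx]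
      simp [g, mul_comm]
    · rw [indicator_of_notMem (mt (H.mul_mem_cancel_left ha).1 hx), indicator_of_notMem hx,
        mul_zero]
  have htranslate : ∫ x in H, g x ∂μ = (γ a : ℂ)⁻¹ * ∫ x in H, g x ∂μ :=
    calc ∫ x in H, g x ∂μ = ∫ x, (H : Set X).indicator g (a * x) ∂μ := by
          rw [integral_mul_left_eq_self, integral_indicator hH]
      _ = (γ a : ℂ)⁻¹ * ∫ x in H, g x ∂μ := by
          simp_rw [hshift]
          rw [integral_const_mul, integral_indicator hH]
  refine eq_zero_of_mul_eq_self_left ?_ htranslate.symm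
  simpa [Circle.coe_eq_one] using hγa

lemma fourierTransform_indicator_subgroup (hH : MeasurableSet (H : Set X)) (c : ℂ) :
    fourierTransform μ ((H : Set X).indicator fun _ => c) =
      (annihilator H).indicator fun _ => c * μ.real H := by
  ext γ
  have hmul : (fun x => (H : Set X).indicator (fun _ => c) x * (γ x : ℂ)⁻¹) =
      (H : Set X).indicator fun x => c * (γ x : ℂ)⁻¹ :=
    funext fun x => (indicator_mul_left _ (fun _ => c) fun x => (γ x : ℂ)⁻¹).symm
  rw [fourierTransform, hmul, integral_indicator hH, integral_const_mul]
  by_cases hγ : γ ∈ annihilator H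
  · have htrivial : EqOn (fun x => (γ x : ℂ)⁻¹) (fun _ => 1) H := fun x hx => by simp [hγ x hx]
    rw [indicator_of_mem hγ, setIntegral_congr_fun hH htrivial, setIntegral_const,
      Complex.real_smul, mul_one]
  · rw [indicator_of_notMem hγ, setIntegral_character_eq_zero_of_notMem_annihilator μ hH hγ,
      mul_zero]

theorem exists_measure_support_mul_eq_one_of_subgroup
    {α : Measure X} [α.IsMulLeftInvariant] {ν : Measure (PontryaginDual X)}
    (hPl : PlancherelHolds α ν) (hH : MeasurableSet (H : Set X)) (h0 : α H ≠ 0) (htop : α H ≠ ∞) :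
    ∃ ψ : X → ℂ, Integrable ψ α ∧ eLpNorm ψ 2 α = 1 ∧
      α (support ψ) * ν (support (fourierTransform α ψ)) = 1 := by
  obtain ⟨c, hc⟩ := exists_enorm_sq_mul_eq_one h0 htop
  have hc0 : c ≠ 0 := by rintro rfl; simp at hc
  have hαH : ‖(α.real H : ℂ)‖ₑ = α H := by
    rw [← ofReal_norm, Complex.norm_real, Real.norm_of_nonneg measureReal_nonneg,
      measureReal_def, ofReal_toReal htop]
  have hcH : c * α.real H ≠ 0 := by
    refine mul_ne_zero hc0 ?_
    rw [← enorm_ne_zero, hαH]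
    exact h0
  set ψ := (H : Set X).indicator fun _ => c
  have hψ : Integrable ψ α := (integrable_indicator_iff hH).2 (integrableOn_const htop)
  have hnorm : eLpNorm ψ 2 α = 1 := (eLpNorm_two_indicator_const_eq_one_iff α hH c).2 hc
  have hT : MeasurableSet (annihilator H) := (isClosed_annihilator H).measurableSet
  have hF : ‖c * α.real H‖ₑ ^ 2 * ν (annihilator H) = 1 := by
    rw [← eLpNorm_two_indicator_const_eq_one_iff ν hT, ← fourierTransform_indicator_subgroup α hH,
      hPl ψ hψ ⟨hψ.aestronglyMeasurable, by rw [hnorm]; exact one_lt_top⟩, hnorm]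
  refine ⟨ψ, hψ, hnorm, ?_⟩
  rw [fourierTransform_indicator_subgroup α hH, support_indicator, support_indicator,
    support_const hc0, support_const hcH, inter_univ, inter_univ]
  calc α H * ν (annihilator H) = (‖c‖ₑ ^ 2 * α H) * (α H * ν (annihilator H)) := by
        rw [hc, one_mul]
    _ = ‖c * α.real H‖ₑ ^ 2 * ν (annihilator H) := by rw [enorm_mul, hαH]; ring
    _ = 1 := hF

end Fourier

theorem support_uncertainty_principle_general
    {X : Type*} [CommGroup X] [TopologicalSpace X] [IsTopologicalGroup X]
    [MeasurableSpace X] [BorelSpace X]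
    (hX : CompactSpace X ∨ DiscreteTopology X)
    (α : Measure X) [α.IsHaarMeasure]
    (ν : Measure (PontryaginDual X))
    (hPlancherel : ∀ g : X → ℂ, Integrable g α → MemLp g 2 α →
      eLpNorm (fourierTransform α g) 2 ν = eLpNorm g 2 α) :
    (∀ ψ : X → ℂ, Integrable ψ α → eLpNorm ψ 2 α = 1 →
      1 ≤ α (Function.support ψ) * ν (Function.support (fourierTransform α ψ))) ∧
    (∃ ψ : X → ℂ, Integrable ψ α ∧ eLpNorm ψ 2 α = 1 ∧
      α (Function.support ψ) * ν (Function.support (fourierTransform α ψ)) = 1) := by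
  refine ⟨fun ψ hψ hnorm =>
    one_le_measure_support_mul_measure_support_fourierTransform hPlancherel hψ hnorm, ?_⟩
  rcases hX with hcompact | hdiscrete
  · refine exists_measure_support_mul_eq_one_of_subgroup
      hPlancherel (H := ⊤) ?_ ?_ ?_ <;> rw [Subgroup.coe_top]
    exacts [MeasurableSet.univ, isOpen_univ.measure_ne_zero α univ_nonempty, measure_ne_top α _]
  · refine exists_measure_support_mul_eq_one_of_subgroup
      hPlancherel (H := ⊥) ?_ ?_ ?_ <;> rw [Subgroup.coe_bot]
    exacts [(isOpen_discrete _).measurableSet,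
      (isOpen_discrete _).measure_ne_zero α (singleton_nonempty 1),
      isCompact_singleton.measure_lt_top.ne]

/-- Support uncertainty principle for a compact or discrete abelian group with Haar
measures normalized so that Plancherel holds: for unit `ψ ∈ L²(X)`, the product of the
Haar measures of the supports of `ψ` and of `ψ̂` is at least `1`, and the bound is
attained. -/
theorem support_uncertainty_principle
    {X : Type*} [CommGroup X] [TopologicalSpace X] [IsTopologicalGroup X]
    [MeasurableSpace X] [BorelSpace X]
    (hX : CompactSpace X ∨ DiscreteTopology X)
    (α : Measure X) [α.IsHaarMeasure]
    (ν : Measure (PontryaginDual X)) [ν.IsHaarMeasure]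
    (hPlancherel : ∀ g : X → ℂ, Integrable g α → MemLp g 2 α →
      eLpNorm (fourierTransform α g) 2 ν = eLpNorm g 2 α) :
    (∀ ψ : X → ℂ, Integrable ψ α → eLpNorm ψ 2 α = 1 →
      1 ≤ α (Function.support ψ) * ν (Function.support (fourierTransform α ψ))) ∧
    (∃ ψ : X → ℂ, Integrable ψ α ∧ eLpNorm ψ 2 α = 1 ∧
      α (Function.support ψ) * ν (Function.support (fourierTransform α ψ)) = 1) :=
  support_uncertainty_principle_general hX α ν hPlancherel
end

section
/- Let X be a finite abelian group of cardinality N. For any nonzero function ψ : X → ℂ, let N_t be the number of x ∈ X with ψ(x) ≠ 0 and N_w the number of characters γ ∈ X̂ with ψ̂(γ) ≠ 0, where ψ̂(γ) = Σ_{x∈X} ψ(x) γ(−x). Then N_t · N_w ≥ N, and equality is attained when ψ is a character or a delta function. -/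
/-!
Fourier inversion `N ψ(x) = ∑_γ ψ̂(γ) γ(x)` bounds `N ‖ψ‖_∞` by `N_w ‖ψ̂‖_∞`, while trivially
`‖ψ̂‖_∞ ≤ ‖ψ‖₁ ≤ N_t ‖ψ‖_∞`; since `ψ ≠ 0`, dividing by `‖ψ‖_∞` gives `N ≤ N_t N_w`.
-/

open Finset

namespace DonohoStark

section Characters

variable {X : Type*} [CommGroup X] [Fintype X]

/-- Transfers Mathlib's duality theory for finite abelian groups, which is phrased for
`AddChar`, to circle-valued homomorphisms. -/
noncomputable def charEquiv : (X →* Circle) ≃ AddChar (Additive X) ℂ :=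
  (AddChar.toMonoidHomEquiv (A := Additive X) (M := Circle)).symm.trans
    AddChar.circleEquivComplex.toEquiv

lemma charEquiv_eq_zero_iff (γ : X →* Circle) : charEquiv γ = 0 ↔ γ = 1 := by
  rw [← charEquiv.injective.eq_iff]
  rfl

noncomputable instance : Fintype (X →* Circle) := Fintype.ofEquiv _ charEquiv.symm

lemma card_monoidHom_circle : Fintype.card (X →* Circle) = Fintype.card X := by
  rw [Fintype.card_congr charEquiv, AddChar.card_eq]
  exact Fintype.card_congr Additive.toMul

lemma sum_apply_ne_zero_iff (γ : X →* Circle) : ∑ x, (γ x : ℂ) ≠ 0 ↔ γ = 1 := by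
  rw [← charEquiv_eq_zero_iff, ← AddChar.sum_ne_zero_iff_eq_zero,
    ← Fintype.sum_equiv Additive.ofMul (fun x => (γ x : ℂ)) (charEquiv γ) fun _ => rfl]

lemma sum_monoidHom_circle_apply [DecidableEq X] (x : X) :
    ∑ γ : X →* Circle, (γ x : ℂ) = if x = 1 then (Fintype.card X : ℂ) else 0 := by
  rw [← Fintype.sum_equiv charEquiv.symm (fun ψ => ψ (Additive.ofMul x)) _ (fun _ => rfl)]
  simpa using AddChar.sum_apply_eq_ite (Additive.ofMul x)

end Characters

section Support

variable {α β E F : Type*} [Fintype α] [Fintype β] [NormedAddCommGroup E] [NormedAddCommGroup F]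

lemma sum_norm_le_card_support_mul (f : α → E) {M : ℝ} (hM : ∀ a, ‖f a‖ ≤ M) :
    ∑ a, ‖f a‖ ≤ Nat.card {a // f a ≠ 0} * M := by
  classical
  rw [Nat.card_eq_fintype_card, Fintype.card_subtype, ← nsmul_eq_mul,
    ← sum_filter_of_ne fun a _ h => norm_ne_zero_iff.mp h]
  exact sum_le_card_nsmul _ _ _ fun a _ => hM a

lemma le_card_support_mul_card_support {f : α → E} {g : β → F} (hf : f ≠ 0) {c : ℝ}
    (hg : ∀ b, ‖g b‖ ≤ ∑ a, ‖f a‖) (hfg : ∀ a, c * ‖f a‖ ≤ ∑ b, ‖g b‖) :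
    c ≤ Nat.card {a // f a ≠ 0} * Nat.card {b // g b ≠ 0} := by
  obtain ⟨a, ha⟩ := Function.ne_iff.mp hf
  obtain ⟨a₀, -, ha₀⟩ := exists_max_image univ (fun a => ‖f a‖) ⟨a, mem_univ a⟩
  have hpos : 0 < ‖f a₀‖ := (norm_pos_iff.mpr ha).trans_le (ha₀ a (mem_univ a))
  have hfM : ∑ a, ‖f a‖ ≤ Nat.card {a // f a ≠ 0} * ‖f a₀‖ :=
    sum_norm_le_card_support_mul f fun a => ha₀ a (mem_univ a)
  have hgM : ∑ b, ‖g b‖ ≤ Nat.card {b // g b ≠ 0} * (Nat.card {a // f a ≠ 0} * ‖f a₀‖) :=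
    sum_norm_le_card_support_mul g fun b => (hg b).trans hfM
  refine le_of_mul_le_mul_right ?_ hpos
  linarith [hfg a₀]

end Support

section Fourier

variable {X : Type*} [CommGroup X] [Fintype X]

noncomputable def dft (ψ : X → ℂ) (γ : X →* Circle) : ℂ := ∑ x, ψ x * ((γ x)⁻¹ : ℂ)

lemma norm_dft_le (ψ : X → ℂ) (γ : X →* Circle) : ‖dft ψ γ‖ ≤ ∑ x, ‖ψ x‖ :=
  (norm_sum_le _ _).trans_eq <| sum_congr rfl fun x _ => by simp [Circle.norm_coe]

lemma sum_dft_mul_apply (ψ : X → ℂ) (x : X) :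
    ∑ γ, dft ψ γ * γ x = Fintype.card X * ψ x := by
  classical
  calc ∑ γ, dft ψ γ * γ x = ∑ y, ψ y * ∑ γ : X →* Circle, (γ (x * y⁻¹) : ℂ) := by
        simp only [dft, sum_mul, mul_sum]
        rw [sum_comm]
        refine sum_congr rfl fun y _ => sum_congr rfl fun γ _ => ?_
        simp only [map_mul, map_inv, Circle.coe_mul, Circle.coe_inv]
        ring
    _ = Fintype.card X * ψ x := by
        simp only [sum_monoidHom_circle_apply, mul_inv_eq_one, mul_ite, mul_zero, sum_ite_eq,
          mem_univ, if_true]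
        ring

lemma mul_norm_le_sum_norm_dft (ψ : X → ℂ) (x : X) :
    Fintype.card X * ‖ψ x‖ ≤ ∑ γ, ‖dft ψ γ‖ :=
  calc Fintype.card X * ‖ψ x‖ = ‖∑ γ, dft ψ γ * γ x‖ := by simp [sum_dft_mul_apply]
    _ ≤ ∑ γ, ‖dft ψ γ‖ :=
      (norm_sum_le _ _).trans_eq <| sum_congr rfl fun γ _ => by simp [Circle.norm_coe]

theorem card_le_card_support_mul_card_support_dft (ψ : X → ℂ) (hψ : ψ ≠ 0) :
    Nat.card X ≤ Nat.card {x // ψ x ≠ 0} * Nat.card {γ // dft ψ γ ≠ 0} := by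
  have := le_card_support_mul_card_support hψ (norm_dft_le ψ) (mul_norm_le_sum_norm_dft ψ)
  rw [Nat.card_eq_fintype_card]
  exact_mod_cast this

lemma dft_coe_ne_zero_iff (γ₀ γ : X →* Circle) : dft (fun x => (γ₀ x : ℂ)) γ ≠ 0 ↔ γ = γ₀ := by
  have : dft (fun x => (γ₀ x : ℂ)) γ = ∑ x, ((γ₀ * γ⁻¹) x : ℂ) :=
    sum_congr rfl fun x _ => by simp
  rw [this, sum_apply_ne_zero_iff, mul_inv_eq_one, eq_comm]

lemma dft_indicator_singleton (x₀ : X) (γ : X →* Circle) :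
    dft (Set.indicator {x₀} fun _ => 1) γ = ((γ x₀)⁻¹ : ℂ) := by
  classical
  simp [dft, Set.indicator_apply]

end Fourier

end DonohoStark

open DonohoStark

/-- Donoho–Stark uncertainty principle for a finite abelian group `X` of cardinality
`N`: for every nonzero `ψ : X → ℂ`, the number `N_t` of points where `ψ ≠ 0` and the
number `N_w` of characters where `ψ̂ ≠ 0` satisfy `N_t · N_w ≥ N`; moreover equality
holds when `ψ` is a character or a delta function. -/
theorem donoho_stark_uncertainty
    {X : Type*} [CommGroup X] [Fintype X] :
    (∀ ψ : X → ℂ, ψ ≠ 0 →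
      Nat.card X ≤ Nat.card {x : X // ψ x ≠ 0} *
        Nat.card {γ : X →* Circle // (∑ x, ψ x * ((γ x)⁻¹ : ℂ)) ≠ 0}) ∧
    (∀ γ₀ : X →* Circle,
      Nat.card {x : X // (γ₀ x : ℂ) ≠ 0} *
        Nat.card {γ : X →* Circle // (∑ x, (γ₀ x : ℂ) * ((γ x)⁻¹ : ℂ)) ≠ 0} =
          Nat.card X) ∧
    (∀ x₀ : X,
      Nat.card {x : X // Set.indicator {x₀} (fun _ => (1 : ℂ)) x ≠ 0} *
        Nat.card {γ : X →* Circle //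
          (∑ x, Set.indicator {x₀} (fun _ => (1 : ℂ)) x * ((γ x)⁻¹ : ℂ)) ≠ 0} =
            Nat.card X) := by
  refine ⟨card_le_card_support_mul_card_support_dft, fun γ₀ => ?_, fun x₀ => ?_⟩
  · have hsupp : Nat.card {x : X // (γ₀ x : ℂ) ≠ 0} = Nat.card X :=
      Nat.card_congr <| Equiv.subtypeUnivEquiv fun x => Circle.coe_ne_zero _
    have hdft : Nat.card {γ // dft (γ₀ ·) γ ≠ 0} = 1 := by
      rw [Nat.card_congr (Equiv.subtypeEquivRight (dft_coe_ne_zero_iff γ₀)), Nat.card_unique]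
    exact (congr_arg₂ (· * ·) hsupp hdft).trans (mul_one _)
  · have hsupp : Nat.card {x : X // Set.indicator {x₀} (fun _ => (1 : ℂ)) x ≠ 0} = 1 := by
      simp
    have hdft : Nat.card {γ // dft (Set.indicator {x₀} fun _ => 1) γ ≠ 0} = Nat.card X := by
      rw [Nat.card_congr <| Equiv.subtypeUnivEquiv fun γ => by
        simp [dft_indicator_singleton, Circle.coe_ne_zero], Nat.card_eq_fintype_card,
        card_monoidHom_circle, Nat.card_eq_fintype_card]
    exact (congr_arg₂ (· * ·) hsupp hdft).trans (one_mul _)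
end
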